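/- arXiv:1108.1784 — 9 statements merged into one kernel-verified Lean document; each statement's English description precedes it below -/
import Mathlib

section
/- Let G be a finite group. If κ(G) < 7/(4|G|) then G is abelian. -/
noncomputable def kappa (G : Type*) [Group G] : ℝ :=
  (Nat.card {p : G × G // IsConj p.1 p.2} : ℝ) / (Nat.card G : ℝ) ^ 2

theorem abelian_of_kappa_lt (G : Type*) [Group G] [Fintype G]
    (h : kappa G < 7 / (4 * (Nat.card G : ℝ))) :
    ∀ a b : G, a * b = b * a := by
  classical
  by_contra hab
  -- G is nonabelian. Key step 1: center has index ≥ 4.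
  have hcomm : ¬ IsCyclic (G ⧸ Subgroup.center G) := by
    intro hc
    exact hab fun a b => commutative_of_cyclic_center_quotient
      (QuotientGroup.mk' (Subgroup.center G)) (by simp) a b
  set n := Nat.card G with hn
  have hnpos : 0 < n := Nat.card_pos
  set z := Nat.card (Subgroup.center G) with hz
  have hidx : (Subgroup.center G).index * z = n := Subgroup.index_mul_card _
  have hidx4 : 4 ≤ (Subgroup.center G).index := by
    have hi : (Subgroup.center G).index = Nat.card (G ⧸ Subgroup.center G) := rfl
    have h1 : (Subgroup.center G).index ≠ 1 := by
      intro he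
      have hq : Nat.card (G ⧸ Subgroup.center G) = 1 := hi ▸ he
      exact hcomm (@isCyclic_of_subsingleton _ _
        (Nat.card_eq_one_iff_unique.mp hq).1)
    have h2 : (Subgroup.center G).index ≠ 2 := fun he =>
      hcomm (@isCyclic_of_prime_card _ _ 2 ⟨Nat.prime_two⟩ (hi ▸ he))
    have h3 : (Subgroup.center G).index ≠ 3 := fun he =>
      hcomm (@isCyclic_of_prime_card _ _ 3 ⟨Nat.prime_three⟩ (hi ▸ he))
    have h0 : (Subgroup.center G).index ≠ 0 := by
      intro he; rw [he] at hidx; omega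
    omega
  have hz4 : 4 * z ≤ n := by
    calc 4 * z ≤ (Subgroup.center G).index * z := by
          exact Nat.mul_le_mul_right z hidx4
      _ = n := hidx
  -- Key step 2: count conjugate pairs.
  have hcard : Nat.card {p : G × G // IsConj p.1 p.2}
      = ∑ g : G, Fintype.card {h : G // IsConj g h} := by
    rw [Nat.card_eq_fintype_card,
      Fintype.card_congr (Equiv.subtypeProdEquivSigmaSubtype fun a b : G => IsConj a b),
      Fintype.card_sigma]
  have hbound : ∀ g : G, (if g ∈ Subgroup.center G then 1 else 2)
      ≤ Fintype.card {h : G // IsConj g h} := by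
    intro g
    by_cases hg : g ∈ Subgroup.center G
    · simp only [hg, if_true]
      exact Fintype.card_pos_iff.mpr ⟨⟨g, IsConj.refl g⟩⟩
    · simp only [hg, if_false]
      rw [Subgroup.mem_center_iff] at hg
      push_neg at hg
      obtain ⟨x, hx⟩ := hg
      apply Fintype.one_lt_card_iff.mpr
      refine ⟨⟨g, IsConj.refl g⟩, ⟨x * g * x⁻¹, isConj_iff.mpr ⟨x, rfl⟩⟩, ?_⟩
      intro he
      have hv : x * g * x⁻¹ = g := (congrArg Subtype.val he).symm
      exact hx (by simpa using congrArg (· * x) hv)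
  have hsum : 2 * n - z ≤ ∑ g : G, Fintype.card {h : G // IsConj g h} := by
    have h1 : ∑ g : G, (if g ∈ Subgroup.center G then 1 else 2)
        ≤ ∑ g : G, Fintype.card {h : G // IsConj g h} :=
      Finset.sum_le_sum fun g _ => hbound g
    have h2 : ∑ g : G, (if g ∈ Subgroup.center G then 1 else 2) = 2 * n - z := by
      rw [Finset.sum_ite]
      have hzc : (Finset.univ.filter (· ∈ Subgroup.center G)).card = z := by
        rw [hz, Nat.card_eq_fintype_card, Fintype.card_subtype]
      have hnc : (Finset.univ.filter (¬ · ∈ Subgroup.center G)).card = n - z := by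
        have := Finset.card_filter_add_card_filter_not
          (s := (Finset.univ : Finset G)) (p := (· ∈ Subgroup.center G))
        simp only [Finset.card_univ, ← Nat.card_eq_fintype_card] at this
        omega
      have hzn : z ≤ n := by omega
      simp [hzc, hnc, Finset.sum_const]
      omega
    omega
  -- combine
  have hkey : 7 * n ≤ 4 * Nat.card {p : G × G // IsConj p.1 p.2} := by
    rw [hcard]; omega
  -- contradiction with h
  rw [kappa] at h
  have hnR : (0:ℝ) < (n:ℝ) := by exact_mod_cast hnpos
  rw [div_lt_div_iff₀ (by positivity) (by positivity)] at h
  have : (Nat.card {p : G × G // IsConj p.1 p.2} : ℝ) * (4 * n) < 7 * n^2 := by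
    nlinarith [h]
  have h2 : (7 * n : ℝ) ≤ 4 * Nat.card {p : G × G // IsConj p.1 p.2} := by
    exact_mod_cast hkey
  nlinarith [this, h2, hnR]
end

section
/- Let G be a finite non-abelian group. Then κ(G) = 7/(4|G|) if and only if the centre Z(G) has index 4 in G. -/
/-!
Counting conjugate pairs by their first entry gives `∑_g [G : C_G(g)]`. The summand is `1` on
`Z(G)` and at least `2` elsewhere, so the count is at least `2|G| - |Z(G)|`; when
`[G : Z(G)] = 4` every non-central `g` has `Z(G) < C_G(g) < G`, hence `[G : C_G(g)] = 2` and the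
bound is attained, giving `7|G|/4`. Conversely a count of `7|G|/4` forces `|G| ≤ 4|Z(G)|`, while
`G/Z(G)` cannot be cyclic for non-abelian `G`, so `[G : Z(G)] ≥ 4`.
-/

namespace Subgroup

variable {G : Type*} [Group G]

theorem nat_card_isConj_eq_index_centralizer (g : G) :
    Nat.card {h : G // IsConj g h} = (centralizer {g}).index :=
  calc Nat.card {h : G // IsConj g h} = Nat.card (MulAction.orbit (ConjAct G) g) :=
        Nat.card_congr <| Equiv.subtypeEquivRight fun _ ↦
          (ConjAct.mem_orbit_conjAct.trans isConj_comm).symm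
    _ = (MulAction.stabilizer (ConjAct G) g).index := by
      rw [MulAction.index_stabilizer, Nat.card_coe_set_eq]
    _ = (centralizer {g}).index := by
      rw [centralizer_eq_comap_stabilizer]
      exact (index_comap_of_surjective _ ConjAct.toConjAct.surjective).symm

theorem index_centralizer_eq_one_iff {g : G} : (centralizer {g}).index = 1 ↔ g ∈ center G := by
  rw [index_eq_one, centralizer_eq_top_iff_subset, Set.singleton_subset_iff, SetLike.mem_coe]

theorem two_le_index_centralizer [Finite G] {g : G} (hg : g ∉ center G) :
    2 ≤ (centralizer {g}).index := by
  have := (centralizer {g}).index_ne_zero_of_finite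
  have := mt index_centralizer_eq_one_iff.mp hg
  omega

theorem two_mul_index_centralizer_le_index_center [Finite G] {g : G} (hg : g ∉ center G) :
    2 * (centralizer {g}).index ≤ (center G).index := by
  have hrel : (center G).relIndex (centralizer {g}) ≠ 1 := fun h ↦
    hg (relIndex_eq_one.mp h (mem_centralizer_singleton_iff.mpr rfl))
  have hprod := relIndex_mul_index (center_le_centralizer {g})
  have : (center G).relIndex (centralizer {g}) ≠ 0 :=
    left_ne_zero_of_mul (hprod ▸ (center G).index_ne_zero_of_finite)
  rw [← hprod]
  exact Nat.mul_le_mul_right _ (by omega)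

theorem four_le_index_center [Finite G] (hG : ∃ a b : G, a * b ≠ b * a) :
    4 ≤ (center G).index := by
  obtain ⟨a, b, hab⟩ := hG
  by_contra! hlt
  have hdvd : (center G).index ∣ 2 ∨ (center G).index ∣ 3 := by
    have := (center G).index_ne_zero_of_finite
    interval_cases (center G).index <;> omega
  have : IsCyclic (G ⧸ center G) := by
    obtain h | h := hdvd
    · exact isCyclic_of_card_dvd_prime (p := 2) h
    · exact isCyclic_of_card_dvd_prime (p := 3) h
  exact hab ((isMulCommutative_of_isCyclic_quotient_center_self G).is_comm.comm a b)

end Subgroup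

open Subgroup

section ConjugatePairs

variable (G : Type*) [Group G] [Fintype G]

theorem nat_card_isConj_eq_sum_index_centralizer :
    Nat.card {p : G × G // IsConj p.1 p.2} = ∑ g : G, (centralizer {g}).index := by
  rw [Nat.card_congr (Equiv.subtypeProdEquivSigmaSubtype fun a b : G ↦ IsConj a b),
    Nat.card_sigma]
  simp only [nat_card_isConj_eq_index_centralizer]

theorem nat_card_isConj_add_card_center_eq_sum [DecidablePred (· ∈ center G)] :
    Nat.card {p : G × G // IsConj p.1 p.2} + Nat.card (center G) =
      ∑ g : G, ((centralizer {g}).index + if g ∈ center G then 1 else 0) := by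
  rw [Finset.sum_add_distrib, Finset.sum_boole, nat_card_isConj_eq_sum_index_centralizer,
    Nat.cast_id, ← Fintype.card_subtype, Nat.card_eq_fintype_card]

theorem two_mul_card_le_nat_card_isConj_add_card_center :
    2 * Nat.card G ≤ Nat.card {p : G × G // IsConj p.1 p.2} + Nat.card (center G) := by
  classical
  rw [nat_card_isConj_add_card_center_eq_sum, Nat.card_eq_fintype_card, mul_comm,
    ← Finset.card_univ, ← smul_eq_mul]
  refine Finset.card_nsmul_le_sum _ _ _ fun g _ ↦ ?_
  by_cases hg : g ∈ center G
  · simp [index_centralizer_eq_one_iff.mpr hg, hg]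
  · simpa [hg] using two_le_index_centralizer hg

theorem nat_card_isConj_add_card_center_of_index_center_eq_four
    (h : (center G).index = 4) :
    Nat.card {p : G × G // IsConj p.1 p.2} + Nat.card (center G) = 2 * Nat.card G := by
  classical
  rw [nat_card_isConj_add_card_center_eq_sum, Nat.card_eq_fintype_card, mul_comm,
    ← Finset.card_univ]
  refine Finset.sum_const_nat fun g _ ↦ ?_
  by_cases hg : g ∈ center G
  · simp [index_centralizer_eq_one_iff.mpr hg, hg]
  · have := two_le_index_centralizer hg
    have := two_mul_index_centralizer_le_index_center hg
    simp only [hg, if_false]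
    omega

end ConjugatePairs

theorem kappa_eq_div_iff (G : Type*) [Group G] [Finite G] (a b : ℕ) (hb : b ≠ 0) :
    kappa G = a / (b * Nat.card G) ↔
      b * Nat.card {p : G × G // IsConj p.1 p.2} = a * Nat.card G := by
  have hN : (Nat.card G : ℝ) ≠ 0 := Nat.cast_ne_zero.mpr Nat.card_pos.ne'
  rw [kappa, div_eq_div_iff (pow_ne_zero 2 hN) (mul_ne_zero (Nat.cast_ne_zero.mpr hb) hN),
    ← Nat.cast_inj (R := ℝ)]
  push_cast
  refine Iff.trans ?_ (mul_left_inj' hN)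
  constructor <;> intro h <;> linear_combination h

theorem kappa_eq_seven_quarters_iff_center_index_four (G : Type*) [Group G] [Fintype G]
    (hna : ∃ a b : G, a * b ≠ b * a) :
    kappa G = 7 / (4 * (Nat.card G : ℝ)) ↔ (Subgroup.center G).index = 4 := by
  have hcard := (center G).index_mul_card
  have hkappa := kappa_eq_div_iff G 7 4 (by norm_num)
  rw [Nat.cast_ofNat, Nat.cast_ofNat] at hkappa
  rw [hkappa]
  constructor
  · intro hpairs
    have hbound := two_mul_card_le_nat_card_isConj_add_card_center G
    have hfour := four_le_index_center hna
    have hcenter : 0 < Nat.card (center G) := Nat.card_pos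
    nlinarith
  · intro hindex
    have hpairs := nat_card_isConj_add_card_center_of_index_center_eq_four G hindex
    rw [hindex] at hcard
    omega
end

section
/- Let G be a finite group and N a non-trivial normal subgroup of G. Then κ(G) < κ(G/N). -/
theorem Nat.card_lt_of_injective_of_notMem {α β : Type*} [Finite β] (f : α → β)
    (hf : Function.Injective f) {b : β} (hb : b ∉ Set.range f) :
    Nat.card α < Nat.card β := by
  have := Finite.of_injective f hf
  have := Fintype.ofFinite α
  have := Fintype.ofFinite β
  simpa only [Nat.card_eq_fintype_card] using Fintype.card_lt_of_injective_of_notMem f hf hb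

abbrev ConjPairs (G : Type*) [Group G] : Type _ := {p : G × G // IsConj p.1 p.2}

/-- Writing each element of `G` as a coset together with an element of `N` embeds
`ConjPairs G` into `ConjPairs (G ⧸ N) × N × N`; the pair `(1, n)` with `1 ≠ n ∈ N` lies over
`(1, 1)` but is not conjugate, so the embedding misses a point. -/
theorem card_conjPairs_lt_card_conjPairs_quotient_mul {G : Type*} [Group G] [Finite G]
    (N : Subgroup G) [N.Normal] (hN : N ≠ ⊥) :
    Nat.card (ConjPairs G) < Nat.card (ConjPairs (G ⧸ N)) * Nat.card N ^ 2 := by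
  obtain ⟨n, hnN, hn1⟩ := N.bot_or_exists_ne_one.resolve_left hN
  let e : G ≃ (G ⧸ N) × N := Subgroup.groupEquivQuotientProdSubgroup
  let f : ConjPairs G → ConjPairs (G ⧸ N) × N × N := fun p =>
    (⟨(p.1.1, p.1.2), (QuotientGroup.mk' N).map_isConj p.2⟩, (e p.1.1).2, (e p.1.2).2)
  have hf : Function.Injective f := by
    rintro ⟨⟨g, h⟩, _⟩ ⟨⟨g', h'⟩, _⟩ hgh
    simp only [f, Prod.mk.injEq, Subtype.ext_iff] at hgh
    obtain ⟨⟨hg₁, hh₁⟩, hg₂, hh₂⟩ := hgh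
    have hg : g = g' := e.injective (Prod.ext hg₁ (Subtype.ext hg₂))
    have hh : h = h' := e.injective (Prod.ext hh₁ (Subtype.ext hh₂))
    subst hg hh
    rfl
  have hb : (⟨(1, 1), IsConj.refl 1⟩, (e 1).2, (e n).2) ∉ Set.range f := by
    rintro ⟨⟨⟨g, h⟩, hconj⟩, hfgh⟩
    simp only [f, Prod.mk.injEq, Subtype.ext_iff] at hfgh
    obtain ⟨⟨hg₁, hh₁⟩, hg₂, hh₂⟩ := hfgh
    have hn : (n : G ⧸ N) = 1 := (QuotientGroup.eq_one_iff n).mpr hnN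
    have hg : g = 1 := e.injective (Prod.ext hg₁ (Subtype.ext hg₂))
    have hh : h = n := e.injective (Prod.ext (hh₁.trans hn.symm) (Subtype.ext hh₂))
    subst hg hh
    exact hn1 (isConj_one_right.mp hconj)
  calc Nat.card (ConjPairs G) < Nat.card (ConjPairs (G ⧸ N) × N × N) :=
        Nat.card_lt_of_injective_of_notMem f hf hb
    _ = Nat.card (ConjPairs (G ⧸ N)) * Nat.card N ^ 2 := by
        rw [Nat.card_prod, Nat.card_prod, sq]

theorem kappa_lt_kappa_quotient (G : Type*) [Group G] [Finite G]
    (N : Subgroup G) [N.Normal] (hN : N ≠ ⊥) :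
    kappa G < kappa (G ⧸ N) := by
  have hcard := card_conjPairs_lt_card_conjPairs_quotient_mul N hN
  have hN_pos : (0 : ℝ) < Nat.card N := by exact_mod_cast Nat.card_pos
  have hQ_pos : (0 : ℝ) < Nat.card (G ⧸ N) := by exact_mod_cast Nat.card_pos
  calc kappa G = Nat.card (ConjPairs G) / (Nat.card (G ⧸ N) ^ 2 * Nat.card N ^ 2) := by
        rw [kappa, N.card_eq_card_quotient_mul_card_subgroup, Nat.cast_mul, mul_pow]
    _ < Nat.card (ConjPairs (G ⧸ N)) * Nat.card N ^ 2
          / (Nat.card (G ⧸ N) ^ 2 * Nat.card N ^ 2) := by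
        gcongr
        exact_mod_cast hcard
    _ = kappa (G ⧸ N) := by
        rw [kappa, mul_div_mul_right _ _ (by positivity)]
end

section
/- Let G be a finite group containing an involution t with C_G(t) = ⟨t⟩ (a self-centralizing involution). Then κ(G) = 1/4 + 1/|G| - 1/|G|^2. -/
open Subgroup

section Conjugacy

variable {G : Type*} [Group G]

theorem natCard_isConj_eq_index_centralizer (g : G) :
    Nat.card {h // IsConj g h} = (centralizer {g}).index := by
  have : (centralizer {g}).index = (MulAction.stabilizer (ConjAct G) g).index := by
    rw [centralizer_eq_comap_stabilizer]
    exact index_comap_of_surjective _ ConjAct.toConjAct.surjective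
  rw [this, MulAction.index_stabilizer, ConjAct.orbit_eq_carrier_conjClasses]
  rfl

theorem natCard_isConj_pairs_eq_sum [Fintype G] :
    Nat.card {p : G × G // IsConj p.1 p.2} = ∑ g : G, Nat.card {h // IsConj g h} := by
  rw [Nat.card_congr (Equiv.subtypeProdEquivSigmaSubtype fun g h : G => IsConj g h),
    Nat.card_sigma]

theorem natCard_compl_of_index_eq_two [Finite G] {N : Subgroup G} (hN : N.index = 2) :
    Nat.card ((N : Set G)ᶜ : Set G) = Nat.card N := by
  have := N.card_mul_index
  rw [hN] at this
  rw [Nat.card_coe_set_eq, Set.ncard_compl, ← Nat.card_coe_set_eq, SetLike.coe_sort_coe]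
  omega

end Conjugacy

section SelfCentralizing

variable {G : Type*} [Group G] {t : G}

theorem Sylow.coe_eq_zpowers_of_centralizer_le [Finite G] {p : ℕ} [hp : Fact p.Prime]
    (ht : orderOf t = p) (hc : centralizer {t} ≤ zpowers t) (P : Sylow p G) (htP : t ∈ P) :
    (P : Subgroup G) = zpowers t := by
  subst ht
  have ht1 : t ≠ 1 := fun h => hp.out.ne_one (by rw [h, orderOf_one])
  have : Nontrivial P := ⟨⟨⟨t, htP⟩, 1, fun h => ht1 (congrArg Subtype.val h)⟩⟩
  have := P.isPGroup'.center_nontrivial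
  obtain ⟨z, hz⟩ := exists_ne (1 : center P)
  have hzt : ((z : P) : G) ∈ zpowers t := hc <| mem_centralizer_singleton_iff.mpr <|
    (congrArg Subtype.val (mem_center_iff.mp z.2 ⟨t, htP⟩)).symm
  have hzp : orderOf ((z : P) : G) = orderOf t := by
    refine (hp.out.eq_one_or_self_of_dvd _ (orderOf_dvd_of_mem_zpowers hzt)).resolve_left ?_
    rw [orderOf_eq_one_iff]
    exact fun h => hz (Subtype.ext (Subtype.ext h))
  have htz : t ∈ zpowers ((z : P) : G) := by
    rw [eq_of_le_of_card_ge (zpowers_le.mpr hzt) (by rw [Nat.card_zpowers, Nat.card_zpowers, hzp])]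
    exact mem_zpowers t
  obtain ⟨k, hk⟩ := mem_zpowers_iff.mp htz
  refine le_antisymm (fun x hx => hc ?_) (zpowers_le.mpr htP)
  rw [mem_centralizer_singleton_iff, ← hk]
  exact congrArg Subtype.val (mem_center_iff.mp (zpow_mem z.2 k) ⟨x, hx⟩)

theorem exists_isComplement'_zpowers [Finite G] (ht : orderOf t = 2)
    (hc : centralizer {t} ≤ zpowers t) : ∃ N : Subgroup G, IsComplement' N (zpowers t) := by
  have : Fact (Nat.Prime 2) := ⟨Nat.prime_two⟩
  have h2 : IsPGroup 2 (zpowers t) :=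
    IsPGroup.of_card (n := 1) (by rw [Nat.card_zpowers, ht, pow_one])
  obtain ⟨P, hP⟩ := h2.exists_le_sylow
  have hPt := P.coe_eq_zpowers_of_centralizer_le ht hc (hP (mem_zpowers t))
  have hmin : (Nat.card G).minFac = 2 :=
    (Nat.minFac_eq_two_iff _).mpr (ht ▸ orderOf_dvd_natCard t)
  have hcyc : IsCyclic P := by rw [hPt]; infer_instance
  rw [← hPt]
  exact ⟨_, IsCyclic.isComplement' hmin hcyc⟩

theorem MulAut.fixedPointFree_conjNormal {N : Subgroup G} [N.Normal]
    (hN : Disjoint N (zpowers t)) (hc : centralizer {t} ≤ zpowers t) :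
    MonoidHom.FixedPointFree (MulAut.conjNormal t : MulAut N) := by
  intro n hn
  have hnt : (n : G) ∈ centralizer {t} :=
    mem_centralizer_singleton_iff.mpr (mul_inv_eq_iff_eq_mul.mp (congrArg Subtype.val hn)).symm
  exact Subtype.ext (disjoint_iff_inf_le.mp hN ⟨n.2, hc hnt⟩)

theorem MulAut.involutive_conjNormal {N : Subgroup G} [N.Normal] (ht : t ^ 2 = 1) :
    Function.Involutive (MulAut.conjNormal t : MulAut N) := by
  intro n
  rw [← MulAut.mul_apply, ← map_mul, ← sq, ht, map_one, MulAut.one_apply]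

variable {N : Subgroup G}

theorem index_eq_two_of_isComplement'_zpowers (hN : IsComplement' N (zpowers t))
    (ht : orderOf t = 2) : N.index = 2 := by
  rw [hN.symm.index_eq_card, Nat.card_zpowers, ht]

theorem natCard_isConj_of_mem_of_ne_one [Finite G] (hN : IsComplement' N (zpowers t))
    (ht : orderOf t = 2) (hc : centralizer {t} ≤ zpowers t) {n : G} (hn : n ∈ N)
    (hn1 : n ≠ 1) :
    Nat.card {h // IsConj n h} = 2 := by
  have hN2 := index_eq_two_of_isComplement'_zpowers hN ht
  have := normal_of_index_eq_two hN2
  have hφ := MulAut.fixedPointFree_conjNormal hN.disjoint hc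
  have hφ2 := MulAut.involutive_conjNormal (N := N) (ht ▸ pow_orderOf_eq_one t)
  have hle : N ≤ centralizer {n} := fun m hm => mem_centralizer_singleton_iff.mpr
    (congrArg Subtype.val (hφ.commute_all_of_involutive hφ2 ⟨m, hm⟩ ⟨n, hn⟩).eq)
  have htn : t ∉ centralizer {n} := fun htn => hn1 <| disjoint_iff_inf_le.mp hN.disjoint
    ⟨hn, hc (mem_centralizer_singleton_iff.mpr (mem_centralizer_singleton_iff.mp htn).symm)⟩
  have hdvd := index_dvd_of_le hle
  rw [hN2, Nat.dvd_prime Nat.prime_two, index_eq_one] at hdvd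
  rw [natCard_isConj_eq_index_centralizer]
  exact hdvd.resolve_left fun htop => htn (htop ▸ mem_top t)

theorem isConj_of_notMem [Finite G] (hN : IsComplement' N (zpowers t)) (ht : orderOf t = 2)
    (hc : centralizer {t} = zpowers t) {g : G} (hg : g ∉ N) : IsConj t g := by
  have hN2 := index_eq_two_of_isComplement'_zpowers hN ht
  have hNn := normal_of_index_eq_two hN2
  have htN : t ∉ N := fun htN => by
    have : t = 1 := disjoint_iff_inf_le.mp hN.disjoint ⟨htN, mem_zpowers t⟩
    simp [this] at ht
  have hsub : {h | IsConj t h} ⊆ (N : Set G)ᶜ := fun h hth hh => by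
    obtain ⟨c, rfl⟩ := isConj_iff.mp hth
    exact htN (by simpa [mul_assoc] using hNn.conj_mem _ hh c⁻¹)
  have hcard : ((N : Set G)ᶜ).ncard ≤ {h | IsConj t h}.ncard := by
    rw [← Nat.card_coe_set_eq, ← Nat.card_coe_set_eq, natCard_compl_of_index_eq_two hN2]
    change _ ≤ Nat.card {h // IsConj t h}
    rw [natCard_isConj_eq_index_centralizer, hc, hN.index_eq_card]
  have hg' : g ∈ (N : Set G)ᶜ := hg
  rwa [← Set.eq_of_subset_of_ncard_le hsub hcard] at hg'

theorem natCard_isConj_of_notMem [Finite G] (hN : IsComplement' N (zpowers t))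
    (ht : orderOf t = 2) (hc : centralizer {t} = zpowers t) {g : G} (hg : g ∉ N) :
    Nat.card {h // IsConj g h} = Nat.card N := by
  change Nat.card (conjugatesOf g) = _
  rw [← isConj_iff_conjugatesOf_eq.mp (isConj_of_notMem hN ht hc hg)]
  change Nat.card {h // IsConj t h} = _
  rw [natCard_isConj_eq_index_centralizer, hc, hN.index_eq_card]

theorem natCard_isConj_pairs_add_one [Fintype G] (hN : IsComplement' N (zpowers t))
    (ht : orderOf t = 2) (hc : centralizer {t} = zpowers t) :
    Nat.card {p : G × G // IsConj p.1 p.2} + 1 = Nat.card N * Nat.card N + 2 * Nat.card N := by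
  classical
  have hin : ∑ n : N, Nat.card {h // IsConj (n : G) h} + 1 = 2 * Nat.card N := by
    rw [Fintype.sum_eq_add_sum_compl 1, Finset.sum_congr rfl fun n hn =>
      natCard_isConj_of_mem_of_ne_one hN ht hc.le n.2 (by simpa using hn)]
    have h1 : Nat.card {h // IsConj ((1 : N) : G) h} = 1 := by simp
    rw [h1, Finset.sum_const, Finset.card_compl, Finset.card_singleton, smul_eq_mul,
      Nat.card_eq_fintype_card (α := N)]
    have : 0 < Fintype.card N := Fintype.card_pos
    omega
  have hout :
      ∑ g : {g // g ∉ N}, Nat.card {h // IsConj (g : G) h} = Nat.card N * Nat.card N := by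
    rw [Finset.sum_congr rfl fun g _ => natCard_isConj_of_notMem hN ht hc g.2, Finset.sum_const,
      Finset.card_univ, ← Nat.card_eq_fintype_card, smul_eq_mul]
    exact congrArg (· * _) <|
      natCard_compl_of_index_eq_two (index_eq_two_of_isComplement'_zpowers hN ht)
  rw [natCard_isConj_pairs_eq_sum, ← Fintype.sum_subtype_add_sum_subtype (· ∈ N)]
  omega

end SelfCentralizing

theorem kappa_of_self_centralizing_involution (G : Type*) [Group G] [Fintype G]
    (t : G) (ht : orderOf t = 2)
    (hc : Subgroup.centralizer {t} = Subgroup.zpowers t) :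
    kappa G = 1 / 4 + 1 / (Nat.card G : ℝ) - 1 / (Nat.card G : ℝ) ^ 2 := by
  obtain ⟨N, hN⟩ := exists_isComplement'_zpowers ht hc.le
  have hG : Nat.card G = 2 * Nat.card N := by
    rw [← N.card_mul_index, index_eq_two_of_isComplement'_zpowers hN ht, mul_comm]
  have hpairs : (Nat.card {p : G × G // IsConj p.1 p.2} : ℝ) =
      Nat.card N * Nat.card N + 2 * Nat.card N - 1 := by
    rw [eq_sub_iff_add_eq]
    exact_mod_cast natCard_isConj_pairs_add_one hN ht hc
  have hm : (Nat.card N : ℝ) ≠ 0 := by exact_mod_cast Nat.card_pos.ne'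
  rw [kappa, hpairs, hG]
  push_cast
  field_simp
  ring
end

section
/- Let A be a non-trivial abelian group of odd order and let G = A ⋊ C_2 where the non-identity element of C_2 acts on A by inversion. Then κ(G) = 1/4 + 1/|G| - 1/|G|^2; in particular κ(G) ≥ 1/4. -/
section Aux

variable {A : Type*} [CommGroup A] [Finite A]
  (φ : Multiplicative (ZMod 2) →* MulAut A)

local notation "tt" => (Multiplicative.ofAdd (1 : ZMod 2))

lemma hC2 : ∀ x : Multiplicative (ZMod 2), x = 1 ∨ x = tt := by decide

lemma ht_inv : (tt)⁻¹ = tt := by decide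

lemma ht_ne_one : (tt : Multiplicative (ZMod 2)) ≠ 1 := by decide

omit [Finite A] in
lemma phi_one (a : A) : φ 1 a = a := by simp

lemma self_inv_eq_one (hodd : Odd (Nat.card A)) {a : A} (ha : a⁻¹ = a) : a = 1 := by
  have hcop : (Nat.card A).Coprime 2 := Nat.coprime_two_right.mpr hodd
  have h2 : a ^ 2 = 1 ^ 2 := by
    rw [pow_two, one_pow]
    nth_rewrite 1 [← ha]
    exact inv_mul_cancel a
  exact (powCoprime hcop).injective h2

omit [Finite A] in
lemma conj_mk (a b : A) (x y : Multiplicative (ZMod 2)) :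
    (⟨a, x⟩ : A ⋊[φ] Multiplicative (ZMod 2)) * ⟨b, y⟩ * (⟨a, x⟩ : A ⋊[φ] Multiplicative (ZMod 2))⁻¹
      = ⟨a * φ x b * φ y a⁻¹, y⟩ := by
  have hxy : ∀ u v : Multiplicative (ZMod 2), u * v * u⁻¹ = v := by decide
  ext
  · show (a * φ x b) * φ (x * y) (φ x⁻¹ a⁻¹) = a * φ x b * φ y a⁻¹
    congr 1
    rw [← MulAut.mul_apply, ← map_mul, hxy]
  · show x * y * x⁻¹ = y
    exact hxy x y

lemma conj_of_right_t (hodd : Odd (Nat.card A)) (hφ : ∀ a : A, φ tt a = a⁻¹)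
    (g h : A ⋊[φ] Multiplicative (ZMod 2)) (hg : g.right = tt) (hh : h.right = tt) :
    IsConj g h := by
  have hcop : (Nat.card A).Coprime 2 := Nat.coprime_two_right.mpr hodd
  obtain ⟨a, ha⟩ := (powCoprime hcop).surjective (h.left * g.left⁻¹)
  simp only [powCoprime_apply] at ha
  rw [isConj_iff]
  refine ⟨⟨a, 1⟩, ?_⟩
  have hgeta : g = ⟨g.left, g.right⟩ := rfl
  have hheta : h = ⟨h.left, h.right⟩ := rfl
  rw [hgeta, hheta, hg, hh, conj_mk, phi_one, hφ, inv_inv]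
  congr 1
  rw [mul_right_comm, ← pow_two, ha, inv_mul_cancel_right]

lemma conj_char (hodd : Odd (Nat.card A))
    (hφ : ∀ a : A, φ tt a = a⁻¹) (g h : A ⋊[φ] Multiplicative (ZMod 2)) :
    IsConj g h ↔ g.right = h.right ∧
      (g.right = tt ∨ h.left = g.left ∨ h.left = g.left⁻¹) := by
  constructor
  · rintro hc
    obtain ⟨c, hc⟩ := isConj_iff.mp hc
    subst hc
    obtain ⟨ca, cx⟩ := c
    obtain ⟨ga, gy⟩ := g
    rw [conj_mk]
    refine ⟨rfl, ?_⟩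
    rcases hC2 gy with hy | hy
    · subst hy
      right
      rw [phi_one]
      rcases hC2 cx with hx | hx
      · subst hx
        left
        rw [phi_one, mul_right_comm, mul_inv_cancel, one_mul]
      · subst hx
        right
        rw [hφ, mul_right_comm, mul_inv_cancel, one_mul]
    · left; exact hy
  · rintro ⟨hr, hcase⟩
    rcases hcase with hy | hl | hl
    · exact conj_of_right_t φ hodd hφ g h hy (hr ▸ hy)
    · have : h = g := by
        ext
        · exact hl
        · exact hr.symm
      rw [this]
    · rcases hC2 g.right with hy | hy
      · rw [isConj_iff]
        refine ⟨⟨1, tt⟩, ?_⟩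
        have hgeta : g = ⟨g.left, g.right⟩ := rfl
        have hheta : h = ⟨h.left, h.right⟩ := rfl
        rw [hgeta, hheta, hl, hy, ← hr, hy, conj_mk, phi_one, hφ, inv_one, mul_one, one_mul]
      · exact conj_of_right_t φ hodd hφ g h hy (hr ▸ hy)

omit [Finite A] in
def equiv_prod : (A ⋊[φ] Multiplicative (ZMod 2)) ≃ A × Multiplicative (ZMod 2) :=
  ⟨fun g => (g.left, g.right), fun p => ⟨p.1, p.2⟩, fun _ => rfl, fun _ => rfl⟩

lemma card_G : Nat.card (A ⋊[φ] Multiplicative (ZMod 2)) = 2 * Nat.card A := by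
  have h2 : Nat.card (A × Multiplicative (ZMod 2)) = Nat.card A * 2 := by
    rw [Nat.card_prod]
    congr 1
    simp [Nat.card_eq_fintype_card]
  rw [Nat.card_congr (equiv_prod φ), h2, mul_comm]

noncomputable def conj_equiv (hodd : Odd (Nat.card A)) (hφ : ∀ a : A, φ tt a = a⁻¹) :
    {p : (A ⋊[φ] Multiplicative (ZMod 2)) × (A ⋊[φ] Multiplicative (ZMod 2)) //
        p.1.right = p.2.right ∧
          (p.1.right = tt ∨ p.2.left = p.1.left ∨ p.2.left = p.1.left⁻¹)}
      ≃ (A × A) ⊕ (A ⊕ {a : A // a ≠ 1}) := by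
  classical
  refine
    { toFun := fun p =>
        if h : p.1.1.right = tt then Sum.inl (p.1.1.left, p.1.2.left)
        else if h2 : p.1.2.left = p.1.1.left then Sum.inr (Sum.inl p.1.1.left)
        else Sum.inr (Sum.inr ⟨p.1.1.left, fun ha => h2 (by
          have h3 : p.1.2.left = p.1.1.left⁻¹ := (p.2.2.resolve_left h).resolve_left h2
          rw [h3, ha, inv_one])⟩)
      invFun := Sum.elim
        (fun q => ⟨(⟨q.1, tt⟩, ⟨q.2, tt⟩), rfl, Or.inl rfl⟩)
        (Sum.elim (fun a => ⟨(⟨a, 1⟩, ⟨a, 1⟩), rfl, Or.inr (Or.inl rfl)⟩)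
          (fun a => ⟨(⟨a.1, 1⟩, ⟨(a.1)⁻¹, 1⟩), rfl, Or.inr (Or.inr rfl)⟩))
      left_inv := ?_
      right_inv := ?_ }
  · rintro ⟨⟨⟨a, x⟩, ⟨b, y⟩⟩, hr, hcase⟩
    simp only at hr hcase ⊢
    by_cases h : x = tt
    · rw [dif_pos h]
      apply Subtype.ext
      simp only [Sum.elim_inl]
      have hy : y = tt := hr ▸ h
      subst h; subst hy; rfl
    · rw [dif_neg h]
      by_cases h2 : b = a
      · rw [dif_pos h2]
        apply Subtype.ext
        simp only [Sum.elim_inr, Sum.elim_inl]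
        have hx : x = 1 := (hC2 x).resolve_right h
        have hy : y = 1 := hr ▸ hx
        subst h2; subst hx; subst hy; rfl
      · rw [dif_neg h2]
        apply Subtype.ext
        simp only [Sum.elim_inr]
        have hx : x = 1 := (hC2 x).resolve_right h
        have hy : y = 1 := hr ▸ hx
        have h3 : b = a⁻¹ := (hcase.resolve_left h).resolve_left h2
        subst h3; subst hx; subst hy; rfl
  · rintro (⟨a, b⟩ | a | ⟨a, ha⟩)
    · simp
    · have h1 : (1 : Multiplicative (ZMod 2)) ≠ tt := fun h => ht_ne_one h.symm
      simp [h1]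
    · have h1 : (1 : Multiplicative (ZMod 2)) ≠ tt := fun h => ht_ne_one h.symm
      have h4 : a⁻¹ ≠ a := fun h => ha (self_inv_eq_one hodd h)
      simp [h1, h4]

lemma card_conj (hodd : Odd (Nat.card A)) (hφ : ∀ a : A, φ tt a = a⁻¹) :
    Nat.card {p : (A ⋊[φ] Multiplicative (ZMod 2)) × (A ⋊[φ] Multiplicative (ZMod 2)) //
        IsConj p.1 p.2}
      = Nat.card A * Nat.card A + (Nat.card A + Nat.card {a : A // a ≠ 1}) := by
  classical
  haveI : Finite (A ⋊[φ] Multiplicative (ZMod 2)) := Finite.of_equiv _ (equiv_prod φ).symm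
  have h1 := Nat.card_congr
    ((Equiv.subtypeEquivRight fun p : (A ⋊[φ] Multiplicative (ZMod 2)) × (A ⋊[φ] Multiplicative (ZMod 2)) => conj_char φ hodd hφ p.1 p.2).trans
      (conj_equiv φ hodd hφ))
  rw [h1, Nat.card_sum, Nat.card_sum, Nat.card_prod]

lemma card_ne_one : 1 + Nat.card {a : A // a ≠ 1} = Nat.card A := by
  classical
  haveI : Unique {a : A // a = 1} := ⟨⟨⟨1, rfl⟩⟩, fun x => Subtype.ext x.2⟩
  have := Nat.card_congr (Equiv.sumCompl (fun a : A => a = 1))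
  rw [Nat.card_sum, Nat.card_unique] at this
  exact this

end Aux

theorem kappa_generalized_dihedral (A : Type*) [CommGroup A] [Finite A]
    [Nontrivial A] (hodd : Odd (Nat.card A))
    (φ : Multiplicative (ZMod 2) →* MulAut A)
    (hφ : ∀ a : A, φ (Multiplicative.ofAdd (1 : ZMod 2)) a = a⁻¹) :
    kappa (A ⋊[φ] Multiplicative (ZMod 2)) =
        1 / 4 + 1 / (Nat.card (A ⋊[φ] Multiplicative (ZMod 2)) : ℝ)
          - 1 / (Nat.card (A ⋊[φ] Multiplicative (ZMod 2)) : ℝ) ^ 2 ∧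
      (1 : ℝ) / 4 ≤ kappa (A ⋊[φ] Multiplicative (ZMod 2)) := by
  classical
  haveI : Finite (A ⋊[φ] Multiplicative (ZMod 2)) := Finite.of_equiv _ (equiv_prod φ).symm
  have hn : 0 < Nat.card A := Nat.card_pos
  have hcardG := card_G φ
  have hcount := card_conj φ hodd hφ
  have hm := card_ne_one (A := A)
  set n := Nat.card A with hndef
  have hNn : (1 : ℝ) ≤ (n : ℝ) := by exact_mod_cast hn
  have hmR : (Nat.card {a : A // a ≠ 1} : ℝ) = (n : ℝ) - 1 := by
    have h : (1 : ℝ) + (Nat.card {a : A // a ≠ 1} : ℝ) = (n : ℝ) := by exact_mod_cast hm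
    linarith
  have hkappa : kappa (A ⋊[φ] Multiplicative (ZMod 2)) =
      ((n : ℝ) * n + (n + ((n : ℝ) - 1))) / ((2 * (n : ℝ)) ^ 2) := by
    rw [kappa, hcount, hcardG]
    push_cast [hmR]
    ring_nf
  have hCG : (Nat.card (A ⋊[φ] Multiplicative (ZMod 2)) : ℝ) = 2 * (n : ℝ) := by
    rw [hcardG]; push_cast; ring
  have hne : (2 * (n : ℝ)) ≠ 0 := by positivity
  have heq : kappa (A ⋊[φ] Multiplicative (ZMod 2)) =
      1 / 4 + 1 / (Nat.card (A ⋊[φ] Multiplicative (ZMod 2)) : ℝ)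
        - 1 / (Nat.card (A ⋊[φ] Multiplicative (ZMod 2)) : ℝ) ^ 2 := by
    rw [hkappa, hCG]
    field_simp
    ring
  refine ⟨heq, ?_⟩
  rw [heq, hCG]
  have h2n : (2 : ℝ) ≤ 2 * (n : ℝ) := by linarith
  have hpos : (0 : ℝ) < 2 * (n : ℝ) := by linarith
  have hle : 2 * (n : ℝ) ≤ (2 * (n : ℝ)) ^ 2 := by nlinarith
  have h1 : 1 / (2 * (n : ℝ)) ^ 2 ≤ 1 / (2 * (n : ℝ)) :=
    one_div_le_one_div_of_le hpos hle
  linarith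
end

section
/- Let K be a finite group, x a fixed-point-free automorphism of K of prime order p, and L an x-invariant normal subgroup of K. Then the induced automorphism of K/L is fixed-point-free. -/
theorem induced_automorphism_fixed_point_free (K : Type*) [Group K] [Finite K]
    (x : MulAut K) (p : ℕ) (hp : p.Prime) (hord : orderOf x = p)
    (hfpf : ∀ g : K, x g = g → g = 1)
    (L : Subgroup K) [L.Normal] (hL : ∀ g ∈ L, x g ∈ L) :
    ∀ g : K, (QuotientGroup.mk (x g) : K ⧸ L) = QuotientGroup.mk g →
      (QuotientGroup.mk g : K ⧸ L) = 1 := by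
  intro g hg
  rw [QuotientGroup.eq] at hg
  -- hg : (x g)⁻¹ * g ∈ L
  set f : L → L := fun l => ⟨x l * (l : K)⁻¹, mul_mem (hL l l.2) (inv_mem l.2)⟩ with hf
  have hinj : Function.Injective f := by
    intro l m h
    have h' : x l * (l : K)⁻¹ = x m * (m : K)⁻¹ := congrArg Subtype.val h
    have h2 : (x m)⁻¹ * x l = (m : K)⁻¹ * l := by
      calc (x m)⁻¹ * x l = (x m)⁻¹ * (x l * (l:K)⁻¹) * l := by group
        _ = (x m)⁻¹ * (x m * (m:K)⁻¹) * l := by rw [h']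
        _ = (m : K)⁻¹ * l := by group
    have h3 : x ((m : K)⁻¹ * l) = (m : K)⁻¹ * l := by
      simpa [map_mul, map_inv] using h2
    have h4 : (m : K)⁻¹ * l = 1 := hfpf _ h3
    exact Subtype.ext (inv_mul_eq_one.mp h4).symm ▸ rfl
  have hsurj : Function.Surjective f := Finite.surjective_of_injective hinj
  obtain ⟨l, hl⟩ := hsurj ⟨(x g)⁻¹ * g, hg⟩
  have hl' : x l * (l : K)⁻¹ = (x g)⁻¹ * g := congrArg Subtype.val hl
  have hfix : x (g * l) = g * l := by
    have h5 : x g * x l = g * l := by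
      calc x g * x l = x g * (x l * (l:K)⁻¹) * l := by group
        _ = x g * ((x g)⁻¹ * g) * l := by rw [hl']
        _ = g * l := by group
    simpa [map_mul] using h5
  have h6 : g * l = 1 := hfpf _ hfix
  have hgL : g ∈ L := by
    have : g = (l : K)⁻¹ := eq_inv_of_mul_eq_one_left h6
    rw [this]; exact inv_mem l.2
  exact (QuotientGroup.eq_one_iff g).mpr hgL
end

section
/- For all n, k ∈ ℕ with k ≥ 2, we have s_k(n) ≤ 1/t!, where t = ⌊n/(k-1)⌋ and s_k(n) is the probability that a uniformly random permutation of an n-set has all cycles of length strictly less than k. -/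
/-!
Condition on the cycle through a chosen point `a`. If it has length `j + 1 < k`, it is determined
by the injective sequence `σ a, …, σʲ a` of points other than `a`, and `σ` is determined by this
sequence together with its restriction to the remaining `n - 1 - j` points, which again has only
cycles of length `< k`. Writing `A m` for the number of such permutations of an `m`-set, this gives
`A n ≤ ∑_{j < k-1} (n-1)_j · A (n-1-j)`. By strong induction each summand is at most
`(n-1)! / (t-1)!` with `t = ⌊n/(k-1)⌋`, so `A n ≤ (k-1) (n-1)! / (t-1)! ≤ n! / t!` since
`t (k-1) ≤ n`.
-/

/-- The probability that a uniformly random permutation of an `n`-set has all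
cycles of length strictly less than `k`. -/
noncomputable def shortCycleProb (k n : ℕ) : ℝ :=
  (Nat.card {σ : Equiv.Perm (Fin n) // ∀ x, Function.minimalPeriod (⇑σ) x < k} : ℝ) /
    Nat.factorial n

open Function Equiv
open scoped Nat

theorem Function.Semiconj.minimalPeriod_eq {α β : Type*} {e : α → β} {f : α → α} {g : β → β}
    (h : Semiconj e f g) (he : Injective e) (x : α) :
    minimalPeriod g (e x) = minimalPeriod f x :=
  minimalPeriod_eq_minimalPeriod_iff.2 fun m => by
    simp only [IsPeriodicPt, IsFixedPt, ← (h.iterate_right m) x, he.eq_iff]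

theorem Function.Embedding.card_compl_range {ι α : Type*} [Finite α] (c : ι ↪ α) :
    Nat.card {x // x ∉ Set.range c} = Nat.card α - Nat.card ι := by
  change Nat.card ((Set.range c)ᶜ : Set α) = _
  rw [Nat.card_coe_set_eq, Set.ncard_compl, Set.ncard_range_of_injective c.injective]

def Fin.Embedding.consNe {α : Type*} (a : α) {j : ℕ} (g : Fin j ↪ {x // x ≠ a}) :
    Fin (j + 1) ↪ α :=
  Fin.Embedding.cons (g.trans (Embedding.subtype _)) fun ⟨i, hi⟩ => (g i).2 hi

namespace Function

variable {α : Type*} {f : α → α} {a : α} {j : ℕ}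

def iterateSuccEmb (f : α → α) (a : α) (hj : minimalPeriod f a = j + 1) :
    Fin j ↪ {x // x ≠ a} where
  toFun i := ⟨f^[i + 1] a, fun h => by
    have := (iterate_eq_iterate_iff_of_lt_minimalPeriod (m := i + 1) (n := 0)
      (by omega) (by omega)).1 h
    omega⟩
  inj' i i' h := by
    have := (iterate_eq_iterate_iff_of_lt_minimalPeriod (by omega) (by omega)).1
      (congrArg Subtype.val h)
    exact Fin.ext (by omega)

theorem consNe_iterateSuccEmb (hj : minimalPeriod f a = j + 1) (i : Fin (j + 1)) :
    Fin.Embedding.consNe a (iterateSuccEmb f a hj) i = f^[i] a := by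
  cases i using Fin.cases <;> rfl

theorem apply_consNe_iterateSuccEmb (hj : minimalPeriod f a = j + 1) (i : Fin (j + 1)) :
    f (Fin.Embedding.consNe a (iterateSuccEmb f a hj) i) =
      Fin.Embedding.consNe a (iterateSuccEmb f a hj) (finRotate _ i) := by
  rw [consNe_iterateSuccEmb, consNe_iterateSuccEmb, finRotate_apply, Fin.val_add, Fin.val_one',
    Nat.add_mod_mod, ← iterate_succ_apply' f, ← iterate_mod_minimalPeriod_eq, hj]

end Function

universe u

namespace Equiv.Perm

variable {α : Type u}

theorem minimalPeriod_subtypePerm {p : α → Prop} (σ : Perm α) (h : ∀ x, p (σ x) ↔ p x)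
    (x : {x // p x}) : minimalPeriod (σ.subtypePerm h) x = minimalPeriod σ x :=
  (Semiconj.minimalPeriod_eq (e := Subtype.val) (fun _ => rfl) Subtype.val_injective x).symm

theorem card_shortCycles_rotating_le [Finite α] {k m : ℕ} (c : Fin m ↪ α) :
    Nat.card {σ : Perm α // (∀ x, minimalPeriod σ x < k) ∧ ∀ i, σ (c i) = c (finRotate m i)} ≤
      Nat.card {τ : Perm {x // x ∉ Set.range c} // ∀ x, minimalPeriod τ x < k} := by
  have hstable (σ : Perm α) (hσ : ∀ i, σ (c i) = c (finRotate m i)) (x : α) :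
      σ x ∉ Set.range c ↔ x ∉ Set.range c := by
    refine not_congr ⟨fun ⟨i, hi⟩ => ⟨(finRotate m).symm i, σ.injective ?_⟩, ?_⟩
    · rw [hσ, apply_symm_apply, hi]
    · rintro ⟨i, rfl⟩
      exact ⟨_, (hσ i).symm⟩
  refine Nat.card_le_card_of_injective
    (fun σ => ⟨σ.1.subtypePerm (hstable σ.1 σ.2.2), fun x => by
      rw [minimalPeriod_subtypePerm]; exact σ.2.1 x⟩) ?_
  rintro ⟨σ, _, hσ⟩ ⟨τ, _, hτ⟩ hστ
  ext x
  by_cases hx : x ∈ Set.range c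
  · obtain ⟨i, rfl⟩ := hx
    rw [hσ, hτ]
  · simpa using congrArg (fun ρ : Perm {x // x ∉ Set.range c} => (ρ ⟨x, hx⟩ : α))
      (congrArg Subtype.val hστ)

/-- The summand for `(j, g)` bounds the permutations whose cycle through `a` is
`a, g 0, …, g (j - 1)`. -/
theorem card_shortCycles_le_sum [Fintype α] [DecidableEq α] (k : ℕ) (a : α) :
    Nat.card {σ : Perm α // ∀ x, minimalPeriod σ x < k} ≤
      ∑ j : Fin (k - 1), ∑ g : Fin j ↪ {x // x ≠ a},
        Nat.card {τ : Perm {x // x ∉ Set.range (Fin.Embedding.consNe a g)} //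
          ∀ x, minimalPeriod τ x < k} := by
  let F (j : ℕ) (g : Fin j ↪ {x // x ≠ a}) := {σ : Perm α // (∀ x, minimalPeriod σ x < k) ∧
    ∀ i, σ (Fin.Embedding.consNe a g i) = Fin.Embedding.consNe a g (finRotate _ i)}
  have hperiod (σ : {σ : Perm α // ∀ x, minimalPeriod σ x < k}) :
      minimalPeriod σ.1 a - 1 < k - 1 ∧ minimalPeriod σ.1 a = minimalPeriod σ.1 a - 1 + 1 := by
    have := minimalPeriod_pos_of_mem_periodicPts (σ.1.injective.mem_periodicPts a)
    have := σ.2 a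
    omega
  calc _ ≤ Nat.card (Σ j : Fin (k - 1), Σ g : Fin j ↪ {x // x ≠ a}, F j g) :=
        Nat.card_le_card_of_injective
          (fun σ => ⟨⟨_, (hperiod σ).1⟩, iterateSuccEmb σ a (hperiod σ).2, σ.1, σ.2,
            apply_consNe_iterateSuccEmb (hperiod σ).2⟩)
          fun σ τ h => Subtype.ext (congrArg (fun s => s.2.2.1) h)
    _ = ∑ j : Fin (k - 1), ∑ g : Fin j ↪ {x // x ≠ a}, Nat.card (F j g) := by
      simp only [Nat.card_sigma]
    _ ≤ _ := Finset.sum_le_sum fun j _ => Finset.sum_le_sum fun g _ =>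
      card_shortCycles_rotating_le _

theorem card_shortCycles_mul_le [Finite α] (k : ℕ) (a : α) {s : ℕ}
    (h : ∀ j < k - 1, ∀ (β : Type u) [Finite β], Nat.card β = Nat.card α - 1 - j →
      Nat.card {τ : Perm β // ∀ x, minimalPeriod τ x < k} * s ≤ (Nat.card α - 1 - j)!) :
    Nat.card {σ : Perm α // ∀ x, minimalPeriod σ x < k} * s ≤ (k - 1) * (Nat.card α - 1)! := by
  classical
  have := Fintype.ofFinite α
  calc
    _ ≤ (∑ j : Fin (k - 1), ∑ g : Fin j ↪ {x // x ≠ a},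
          Nat.card {τ : Perm {x // x ∉ Set.range (Fin.Embedding.consNe a g)} //
            ∀ x, minimalPeriod τ x < k}) * s :=
      Nat.mul_le_mul_right _ (card_shortCycles_le_sum k a)
    _ ≤ ∑ j : Fin (k - 1), ∑ _g : Fin j ↪ {x // x ≠ a}, (Nat.card α - 1 - j)! := by
      simp only [Finset.sum_mul]
      refine Finset.sum_le_sum fun j _ => Finset.sum_le_sum fun g _ => h j j.2 _ ?_
      rw [Embedding.card_compl_range, Nat.card_fin]
      omega
    _ ≤ ∑ _j : Fin (k - 1), (Nat.card α - 1)! := by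
      refine Finset.sum_le_sum fun j _ => ?_
      rw [Finset.sum_const, Finset.card_univ, Fintype.card_embedding_eq, Fintype.card_fin,
        Fintype.card_subtype_compl, Fintype.card_subtype_eq, Nat.card_eq_fintype_card, smul_eq_mul]
      obtain hj | hj := le_or_gt (j : ℕ) (Fintype.card α - 1)
      · rw [mul_comm, Nat.factorial_mul_descFactorial hj]
      · simp [Nat.descFactorial_eq_zero_iff_lt.2 hj]
    _ = (k - 1) * (Nat.card α - 1)! := by simp

theorem card_shortCycles_mul_factorial_le [Finite α] (k : ℕ) :
    Nat.card {σ : Perm α // ∀ x, minimalPeriod σ x < k} * (Nat.card α / (k - 1))! ≤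
      (Nat.card α)! := by
  induction hn : Nat.card α using Nat.strong_induction_on generalizing α with
  | _ n ih =>
  set t := n / (k - 1)
  rcases Nat.eq_zero_or_pos t with ht | ht
  · rw [ht, Nat.factorial_zero, mul_one, ← hn, ← Nat.card_perm]
    exact Nat.card_le_card_of_injective _ Subtype.val_injective
  have hk : 0 < k - 1 := Nat.pos_of_ne_zero fun h => by simp [t, h] at ht
  have htn : t * (k - 1) ≤ n := Nat.div_mul_le_self n (k - 1)
  have hkn : k - 1 ≤ n := (Nat.le_mul_of_pos_left _ ht).trans htn
  obtain ⟨a⟩ : Nonempty α := (Nat.card_pos_iff.1 (by omega)).1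
  have hrec : Nat.card {σ : Perm α // ∀ x, minimalPeriod σ x < k} * (t - 1)! ≤
      (k - 1) * (n - 1)! := by
    refine hn ▸ card_shortCycles_mul_le k a fun j hj β _ hβ => ?_
    have ht' : t - 1 ≤ (n - 1 - j) / (k - 1) := by
      rw [Nat.le_div_iff_mul_le hk, Nat.sub_one_mul]
      omega
    calc _ ≤ _ * ((n - 1 - j) / (k - 1))! := Nat.mul_le_mul_left _ (Nat.factorial_le ht')
      _ ≤ _ := hn ▸ ih _ (by omega) (hn ▸ hβ)
  calc _ = Nat.card {σ : Perm α // ∀ x, minimalPeriod σ x < k} * (t - 1)! * t := by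
        rw [mul_assoc, mul_comm _ t, Nat.mul_factorial_pred ht.ne']
    _ ≤ (k - 1) * (n - 1)! * t := Nat.mul_le_mul_right _ hrec
    _ ≤ n * (n - 1)! := by nlinarith
    _ = n ! := Nat.mul_factorial_pred (by omega)

end Equiv.Perm

theorem shortCycleProb_le_general (k n : ℕ) :
    shortCycleProb k n ≤ 1 / Nat.factorial (n / (k - 1)) := by
  have h := Equiv.Perm.card_shortCycles_mul_factorial_le (α := Fin n) k
  rw [Nat.card_fin] at h
  rw [shortCycleProb, div_le_div_iff₀ (by positivity) (by positivity), one_mul]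
  exact_mod_cast h

theorem shortCycleProb_le (k n : ℕ) (hk : 2 ≤ k) :
    shortCycleProb k n ≤ 1 / Nat.factorial (n / (k - 1)) :=
  shortCycleProb_le_general k n
end

section
/- For every positive integer ℓ, the probability r(ℓ) that a uniformly random permutation of an ℓ-set is regular satisfies 1/ℓ ≤ r(ℓ) ≤ 1/ℓ + 2/ℓ² + c/ℓ³, where c = e³/(1 - e/3). Moreover r(ℓ) = Σ_{m | ℓ} m^m/(ℓ^m · m!). -/
/-!
If every point of `σ ∈ Sym(ℓ)` has period `d ≥ 2`, then `σ` is fixed-point free with cycle type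
`d^(ℓ/d)`, so the count of permutations of a given cycle type gives `ℓ! / (d^(ℓ/d) (ℓ/d)!)` such
permutations (also true for `d = 1`). A regular permutation has a common period `d ∣ ℓ`; summing
over `d` and writing `m = ℓ/d` gives `r(ℓ) = ∑_{m ∣ ℓ} m^m / (ℓ^m m!)`.

In this sum the term `m = 1` is `1/ℓ` and the term `m = 2` is `2/ℓ²`. Since `m^m/m! ≤ e^m`, the
terms with `m ≥ 3` are at most `(e/ℓ)^m`; as such a divisor forces `ℓ ≥ 3`, their sum is bounded by
the geometric tail `(e/ℓ)³ / (1 - e/ℓ) ≤ (e³ / (1 - e/3)) / ℓ³`.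
-/

/-- The probability that a uniformly random permutation of an `ℓ`-set is regular,
i.e. all its cycles have the same length (equivalently, all points have the same
minimal period). -/
noncomputable def regularProb (ℓ : ℕ) : ℝ :=
  (Nat.card {σ : Equiv.Perm (Fin ℓ) //
      ∀ x y, Function.minimalPeriod (⇑σ) x = Function.minimalPeriod (⇑σ) y} : ℝ) /
    Nat.factorial ℓ

open Function Finset
open scoped Nat

namespace Equiv.Perm

variable {α : Type*} [Fintype α] [DecidableEq α] {σ : Perm α}

theorem minimalPeriod_eq_card_support_cycleOf {x : α} (hx : σ x ≠ x) :
    minimalPeriod σ x = #(σ.cycleOf x).support := by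
  have hmem : x ∈ (σ.cycleOf x).support := (mem_support_cycleOf_iff' hx).2 SameCycle.rfl
  have key : ∀ n, IsPeriodicPt σ n x ↔ #(σ.cycleOf x).support ∣ n := fun n => by
    rw [IsPeriodicPt, IsFixedPt, iterate_eq_pow,
      (σ.isCycleOn_support_cycleOf x).pow_apply_eq hmem]
  exact Nat.dvd_antisymm ((key _).2 dvd_rfl).minimalPeriod_dvd
    ((key _).1 (isPeriodicPt_minimalPeriod _ _))

theorem mem_cycleType_iff_exists_minimalPeriod {n : ℕ} :
    n ∈ σ.cycleType ↔ ∃ x, σ x ≠ x ∧ minimalPeriod σ x = n := by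
  simp only [cycleType_def, Multiset.mem_map, Finset.mem_val, comp_apply]
  constructor
  · rintro ⟨c, hc, rfl⟩
    obtain ⟨x, hx, -⟩ := (mem_cycleFactorsFinset_iff.1 hc).1
    have hxc : x ∈ c.support := mem_support.2 hx
    refine ⟨x, mem_support.1 (mem_cycleFactorsFinset_support_le hc hxc), ?_⟩
    rw [minimalPeriod_eq_card_support_cycleOf, ← cycle_is_cycleOf hxc hc]
    exact mem_support.1 (mem_cycleFactorsFinset_support_le hc hxc)
  · rintro ⟨x, hx, rfl⟩
    exact ⟨σ.cycleOf x, cycleOf_mem_cycleFactorsFinset_iff.2 (mem_support.2 hx),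
      (minimalPeriod_eq_card_support_cycleOf hx).symm⟩

theorem forall_minimalPeriod_eq_iff {d : ℕ} (hd : 2 ≤ d) :
    (∀ x, minimalPeriod σ x = d) ↔ σ.support = univ ∧ ∀ n ∈ σ.cycleType, n = d := by
  simp only [mem_cycleType_iff_exists_minimalPeriod, eq_univ_iff_forall, mem_support]
  constructor
  · intro h
    refine ⟨fun x hx => ?_, fun n ⟨x, _, hx⟩ => hx ▸ h x⟩
    have := h x
    rw [minimalPeriod_eq_one_iff_isFixedPt.2 hx] at this
    omega
  · rintro ⟨hmoved, h⟩ x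
    exact h _ ⟨x, hmoved x, rfl⟩

theorem forall_minimalPeriod_eq_iff_cycleType_eq {d k : ℕ} (hd : 2 ≤ d)
    (hk : Fintype.card α = k * d) :
    (∀ x, minimalPeriod σ x = d) ↔ σ.cycleType = Multiset.replicate k d := by
  rw [forall_minimalPeriod_eq_iff hd]
  constructor
  · rintro ⟨hsupp, hall⟩
    have hsum : σ.cycleType.sum = k * d := by rw [sum_cycleType, hsupp, card_univ, hk]
    rw [Multiset.eq_replicate_of_mem hall, Multiset.sum_replicate, smul_eq_mul] at hsum
    rw [Multiset.eq_replicate_of_mem hall, Nat.eq_of_mul_eq_mul_right (by omega) hsum]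
  · intro h
    refine ⟨eq_univ_of_card _ ?_, fun n hn => Multiset.eq_of_mem_replicate (h ▸ hn)⟩
    rw [← sum_cycleType, h, Multiset.sum_replicate, smul_eq_mul, hk]

theorem dvd_card_of_forall_minimalPeriod_eq {d : ℕ} (h : ∀ x, minimalPeriod σ x = d) :
    d ∣ Fintype.card α := by
  rcases isEmpty_or_nonempty α with hα | ⟨⟨x₀⟩⟩
  · simp
  have hpos : 0 < d :=
    h x₀ ▸ minimalPeriod_pos_of_mem_periodicPts (σ.injective.mem_periodicPts x₀)
  obtain rfl | hd := (show d = 1 ∨ 2 ≤ d by omega)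
  · exact one_dvd _
  obtain ⟨hsupp, hall⟩ := (forall_minimalPeriod_eq_iff hd).1 h
  refine ⟨Multiset.card σ.cycleType, ?_⟩
  rw [← card_univ, ← hsupp, ← sum_cycleType, Multiset.eq_replicate_of_mem hall,
    Multiset.sum_replicate, Multiset.card_replicate, smul_eq_mul, mul_comm]

theorem card_forall_minimalPeriod_eq_mul {d k : ℕ} (hd : 0 < d) (hk : Fintype.card α = k * d) :
    #{σ : Perm α | ∀ x, minimalPeriod σ x = d} * (d ^ k * k !) = (Fintype.card α)! := by
  obtain rfl | hd := (show d = 1 ∨ 2 ≤ d by omega)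
  · have : ({σ : Perm α | ∀ x, minimalPeriod σ x = 1} : Finset _) = {1} := by
      ext σ
      simp [minimalPeriod_eq_one_iff_isFixedPt, Perm.ext_iff, IsFixedPt]
    rw [this, card_singleton, one_pow, one_mul, one_mul, hk, mul_one]
  · simp_rw [forall_minimalPeriod_eq_iff_cycleType_eq hd hk]
    have hcond : (Multiset.replicate k d).sum ≤ Fintype.card α ∧
        ∀ a ∈ Multiset.replicate k d, 2 ≤ a :=
      ⟨by simp [hk], fun a ha => Multiset.eq_of_mem_replicate ha ▸ hd⟩
    rw [← if_pos hcond (t := (Fintype.card α)!) (e := 0), ← card_of_cycleType_mul_eq]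
    congr 1
    rcases Nat.eq_zero_or_pos k with rfl | hk0
    · simp [hk]
    · simp [Multiset.toFinset_replicate, hk0.ne', hk]


theorem card_regular_eq_sum_divisors [Nonempty α] :
    #{σ : Perm α | ∀ x y, minimalPeriod σ x = minimalPeriod σ y} =
      ∑ d ∈ (Fintype.card α).divisors, #{σ : Perm α | ∀ x, minimalPeriod σ x = d} := by
  obtain ⟨x₀⟩ := ‹Nonempty α›
  rw [card_eq_sum_card_fiberwise (f := fun σ : Perm α => minimalPeriod σ x₀)]
  · refine sum_congr rfl fun d _ => congrArg card (Finset.ext fun σ => ?_)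
    simp only [mem_filter, mem_univ, true_and]
    exact ⟨fun ⟨h, hd⟩ x => hd ▸ h x x₀, fun h => ⟨fun x y => (h x).trans (h y).symm, h x₀⟩⟩
  · intro σ hσ
    simp only [coe_filter, mem_univ, true_and, Set.mem_ofPred_eq] at hσ
    exact Nat.mem_divisors.2
      ⟨dvd_card_of_forall_minimalPeriod_eq fun x => hσ x x₀, Fintype.card_ne_zero⟩

theorem card_regular_div_factorial [Nonempty α] :
    (#{σ : Perm α | ∀ x y, minimalPeriod σ x = minimalPeriod σ y} : ℝ) / (Fintype.card α)! =
      ∑ m ∈ (Fintype.card α).divisors,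
        (m : ℝ) ^ m / ((Fintype.card α : ℝ) ^ m * m !) := by
  set n := Fintype.card α
  rw [card_regular_eq_sum_divisors, Nat.cast_sum, sum_div,
    ← Nat.sum_div_divisors n fun m => (m : ℝ) ^ m / ((n : ℝ) ^ m * m !)]
  refine sum_congr rfl fun d hd => ?_
  obtain ⟨⟨k, hk⟩, hn⟩ := Nat.mem_divisors.1 hd
  have hd0 : 0 < d := Nat.pos_of_ne_zero (by rintro rfl; simp_all)
  have hk0 : k ≠ 0 := by rintro rfl; simp_all
  have hcount := card_forall_minimalPeriod_eq_mul (α := α) hd0 (hk.trans (mul_comm d k))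
  have hS : #{σ : Perm α | ∀ x, minimalPeriod σ x = d} ≠ 0 :=
    left_ne_zero_of_mul (hcount ▸ Nat.factorial_ne_zero _)
  rw [Nat.div_eq_of_eq_mul_right hd0 hk, ← hcount, hk]
  push_cast
  field_simp
  ring

end Equiv.Perm

open Real

theorem pow_div_pow_mul_factorial_le (ℓ m : ℕ) :
    (m : ℝ) ^ m / ((ℓ : ℝ) ^ m * m !) ≤ (exp 1 / ℓ) ^ m := by
  rw [mul_comm, ← div_div, div_pow, exp_one_pow]
  gcongr
  exact pow_div_factorial_le_exp (m : ℝ) (Nat.cast_nonneg m) m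

theorem one_div_le_sum_divisors {ℓ : ℕ} (hℓ : ℓ ≠ 0) :
    1 / (ℓ : ℝ) ≤ ∑ m ∈ ℓ.divisors, (m : ℝ) ^ m / ((ℓ : ℝ) ^ m * m !) := by
  simpa using single_le_sum (f := fun m : ℕ => (m : ℝ) ^ m / ((ℓ : ℝ) ^ m * m !))
    (fun m _ => by positivity) (Nat.one_mem_divisors.2 hℓ)

theorem sum_small_divisors_le (ℓ : ℕ) :
    ∑ m ∈ ℓ.divisors with m ≤ 2, (m : ℝ) ^ m / ((ℓ : ℝ) ^ m * m !) ≤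
      1 / (ℓ : ℝ) + 2 / (ℓ : ℝ) ^ 2 := by
  have hsub : {m ∈ ℓ.divisors | m ≤ 2} ⊆ {1, 2} := fun m hm => by
    obtain ⟨⟨hdvd, hℓ⟩, hm2⟩ := by simpa using hm
    have := Nat.pos_of_dvd_of_pos hdvd (Nat.pos_of_ne_zero hℓ)
    simp only [mem_insert, mem_singleton]
    omega
  refine (sum_le_sum_of_subset_of_nonneg hsub fun m _ _ => by positivity).trans_eq ?_
  rw [sum_pair (by norm_num)]
  norm_num
  ring

theorem sum_large_divisors_le (ℓ : ℕ) :
    ∑ m ∈ ℓ.divisors with ¬ m ≤ 2, (m : ℝ) ^ m / ((ℓ : ℝ) ^ m * m !) ≤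
      exp 3 / (1 - exp 1 / 3) / (ℓ : ℝ) ^ 3 := by
  have he : exp 1 < 3 := exp_one_lt_d9.trans (by norm_num)
  rcases lt_or_ge ℓ 3 with hℓ | hℓ
  · rw [sum_eq_zero fun m hm => ?_]
    · have : 0 < 1 - exp 1 / 3 := by linarith
      positivity
    obtain ⟨⟨hdvd, hℓ0⟩, hm2⟩ := by simpa using hm
    have := Nat.le_of_dvd (Nat.pos_of_ne_zero hℓ0) hdvd
    omega
  have hℓ' : (3 : ℝ) ≤ ℓ := by exact_mod_cast hℓ
  have hsub : {m ∈ ℓ.divisors | ¬ m ≤ 2} ⊆ Ico 3 (ℓ + 1) := fun m hm => by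
    obtain ⟨⟨hdvd, hℓ0⟩, hm2⟩ := by simpa using hm
    have := Nat.le_of_dvd (Nat.pos_of_ne_zero hℓ0) hdvd
    simp only [mem_Ico]
    omega
  have hq : exp 1 / ℓ ≤ exp 1 / 3 := by gcongr
  calc ∑ m ∈ ℓ.divisors with ¬ m ≤ 2, (m : ℝ) ^ m / ((ℓ : ℝ) ^ m * m !)
      ≤ ∑ m ∈ Ico 3 (ℓ + 1), (exp 1 / ℓ) ^ m :=
        (sum_le_sum fun m _ => pow_div_pow_mul_factorial_le ℓ m).trans
          (sum_le_sum_of_subset_of_nonneg hsub fun m _ _ => by positivity)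
    _ ≤ (exp 1 / ℓ) ^ 3 / (1 - exp 1 / ℓ) :=
        geom_sum_Ico_le_of_lt_one (by positivity) (by linarith)
    _ ≤ (exp 1 / ℓ) ^ 3 / (1 - exp 1 / 3) := by gcongr; linarith
    _ = exp 3 / (1 - exp 1 / 3) / (ℓ : ℝ) ^ 3 := by
        rw [div_pow, exp_one_pow]; push_cast; ring

theorem sum_divisors_le (ℓ : ℕ) :
    ∑ m ∈ ℓ.divisors, (m : ℝ) ^ m / ((ℓ : ℝ) ^ m * m !) ≤
      1 / (ℓ : ℝ) + 2 / (ℓ : ℝ) ^ 2 + exp 3 / (1 - exp 1 / 3) / (ℓ : ℝ) ^ 3 := by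
  rw [← sum_filter_add_sum_filter_not _ (· ≤ 2)]
  exact add_le_add (sum_small_divisors_le ℓ) (sum_large_divisors_le ℓ)

theorem regularProb_eq_sum_divisors {ℓ : ℕ} (hℓ : ℓ ≠ 0) :
    regularProb ℓ = ∑ m ∈ ℓ.divisors, (m : ℝ) ^ m / ((ℓ : ℝ) ^ m * m !) := by
  have : Nonempty (Fin ℓ) := ⟨⟨0, Nat.pos_of_ne_zero hℓ⟩⟩
  have h := Equiv.Perm.card_regular_div_factorial (α := Fin ℓ)
  rw [Fintype.card_fin] at h
  rw [regularProb, Nat.card_eq_fintype_card, Fintype.card_subtype]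
  convert h

theorem regularProb_bounds (ℓ : ℕ) (hl : 1 ≤ ℓ) :
    (1 / (ℓ : ℝ) ≤ regularProb ℓ ∧
      regularProb ℓ ≤ 1 / (ℓ : ℝ) + 2 / (ℓ : ℝ) ^ 2 +
        (Real.exp 3 / (1 - Real.exp 1 / 3)) / (ℓ : ℝ) ^ 3) ∧
      regularProb ℓ = ∑ m ∈ ℓ.divisors,
        (m : ℝ) ^ m / ((ℓ : ℝ) ^ m * Nat.factorial m) := by
  have hℓ : ℓ ≠ 0 := Nat.one_le_iff_ne_zero.1 hl
  have hformula := regularProb_eq_sum_divisors hℓ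
  refine ⟨⟨?_, ?_⟩, hformula⟩ <;> rw [hformula]
  · exact one_div_le_sum_divisors hℓ
  · exact sum_divisors_le ℓ
end

section
/- For all n ∈ ℕ and all k with n/2 < k ≤ n, we have κ(S_n) ≥ Σ_{ℓ=k}^{n} κ(S_{n-ℓ})/ℓ², where κ(S_m) denotes the probability that two independently uniformly random elements of the symmetric group S_m are conjugate (with κ(S_0) = 1). -/
/-- `κ(S_m)`, the probability that two independently uniformly random
permutations of an `m`-set are conjugate. -/
noncomputable def kappaS (m : ℕ) : ℝ := kappa (Equiv.Perm (Fin m))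

open Finset Equiv Equiv.Perm Nat

lemma card_filter_eq_eq_sum_sq {α β : Type*} [Fintype α] [DecidableEq β] (f : α → β) :
    #{p : α × α | f p.1 = f p.2} = ∑ b ∈ univ.image f, #{a | f a = b} ^ 2 := by
  rw [card_eq_sum_card_fiberwise (f := fun p => f p.1) (t := univ.image f)
    fun p _ => mem_image_of_mem f (mem_univ p.1)]
  refine sum_congr rfl fun b _ => ?_
  have hfiber : ((univ.filter fun p : α × α => f p.1 = f p.2).filter fun p => f p.1 = b) =
      ({a | f a = b} : Finset α) ×ˢ ({a | f a = b} : Finset α) := by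
    ext p
    simp only [mem_filter, mem_product, mem_univ, true_and]
    constructor
    · rintro ⟨h, rfl⟩
      exact ⟨rfl, h.symm⟩
    · rintro ⟨h1, h2⟩
      exact ⟨h1.trans h2.symm, h1⟩
  rw [hfiber, card_product, sq]

lemma kappa_eq_sum_sq {G β : Type*} [Group G] [Fintype G] [DecidableEq β] (f : G → β)
    (hf : ∀ g h, IsConj g h ↔ f g = f h) :
    kappa G = ∑ b ∈ univ.image f, ((#{g | f g = b} : ℝ) / Fintype.card G) ^ 2 := by
  classical
  have hconj : Nat.card {p : G × G // IsConj p.1 p.2} = #{p : G × G | f p.1 = f p.2} := by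
    rw [Nat.card_eq_fintype_card, Fintype.card_subtype]
    exact congrArg card (filter_congr fun p _ => hf p.1 p.2)
  simp only [kappa, hconj, card_filter_eq_eq_sum_sq, Nat.card_eq_fintype_card, div_pow,
    ← sum_div, Nat.cast_sum, Nat.cast_pow]

lemma kappa_of_subsingleton {G : Type*} [Group G] [Subsingleton G] : kappa G = 1 := by
  have : Unique G := uniqueOfSubsingleton 1
  have : Unique {p : G × G // IsConj p.1 p.2} :=
    ⟨⟨⟨(1, 1), .refl 1⟩⟩, fun _ => Subsingleton.elim _ _⟩
  rw [kappa, Nat.card_unique, Nat.card_unique]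
  norm_num

noncomputable def cycleTypeProb (m : ℕ) (t : Multiset ℕ) : ℝ :=
  #{g : Perm (Fin m) | g.cycleType = t} / (m ! : ℝ)

def cycleTypes (m : ℕ) : Finset (Multiset ℕ) :=
  univ.image fun g : Perm (Fin m) => g.cycleType

lemma le_of_mem_of_mem_cycleTypes {m a : ℕ} {t : Multiset ℕ} (ht : t ∈ cycleTypes m)
    (ha : a ∈ t) : a ≤ m := by
  obtain ⟨g, -, rfl⟩ := mem_image.mp ht
  simpa using (le_card_support_of_mem_cycleType ha).trans (card_le_univ g.support)

lemma kappaS_eq_sum_cycleTypeProb_sq (m : ℕ) :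
    kappaS m = ∑ t ∈ cycleTypes m, cycleTypeProb m t ^ 2 := by
  rw [kappaS, kappa_eq_sum_sq _ fun g h => isConj_iff_cycleType_eq]
  simp [cycleTypeProb, cycleTypes, Fintype.card_perm]

lemma sum_cycleTypeProb_sq_le_kappaS (m : ℕ) (s : Finset (Multiset ℕ)) :
    ∑ t ∈ s, cycleTypeProb m t ^ 2 ≤ kappaS m := by
  rw [kappaS_eq_sum_cycleTypeProb_sq, ← sum_filter_of_ne (p := (· ∈ cycleTypes m))]
  · refine sum_le_sum_of_subset_of_nonneg (fun t ht => (mem_filter.mp ht).2)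
      fun _ _ _ => sq_nonneg _
  · intro t _ ht
    have hne : ({g : Perm (Fin m) | g.cycleType = t} : Finset _).Nonempty := by
      rw [nonempty_iff_ne_empty]
      rintro h0
      simp [cycleTypeProb, h0] at ht
    obtain ⟨g, hg⟩ := hne
    exact mem_image.mpr ⟨g, mem_univ g, (mem_filter.mp hg).2⟩

lemma cycleTypeProb_eq (m : ℕ) (t : Multiset ℕ) :
    cycleTypeProb m t = if t.sum ≤ m ∧ ∀ a ∈ t, 2 ≤ a then
      (((m - t.sum)! * t.prod * ∏ a ∈ t.toFinset, (t.count a)! : ℕ) : ℝ)⁻¹ else 0 := by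
  split_ifs with ht
  · have h := card_of_cycleType_mul_eq (Fin m) t
    rw [Fintype.card_fin, if_pos ht] at h
    obtain ⟨hN, -⟩ := mul_ne_zero_iff.mp (h ▸ factorial_ne_zero m)
    rw [cycleTypeProb, ← h, Nat.cast_mul, div_mul_cancel_left₀ (by exact_mod_cast hN)]
  · rw [cycleTypeProb, (card_of_cycleType_eq_zero_iff (Fin m)).mpr (by simpa using ht),
      Nat.cast_zero, zero_div]

lemma Multiset.prod_count_factorial_cons {α : Type*} [DecidableEq α] {ℓ : α} {t : Multiset α}
    (ht : ℓ ∉ t) :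
    ∏ a ∈ (ℓ ::ₘ t).toFinset, ((ℓ ::ₘ t).count a)! = ∏ a ∈ t.toFinset, (t.count a)! := by
  rw [Multiset.toFinset_cons, prod_insert (by simpa using ht), Multiset.count_cons_self,
    Multiset.count_eq_zero.mpr ht, zero_add, factorial_one, one_mul]
  refine prod_congr rfl fun a ha => ?_
  rw [Multiset.count_cons_of_ne (ne_of_mem_of_not_mem (Multiset.mem_toFinset.mp ha) ht)]

lemma cycleTypeProb_cons {m ℓ : ℕ} {t : Multiset ℕ} (hℓ : 2 ≤ ℓ) (ht : ℓ ∉ t) :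
    cycleTypeProb (m + ℓ) (ℓ ::ₘ t) = cycleTypeProb m t / ℓ := by
  have hvalid : ((ℓ ::ₘ t).sum ≤ m + ℓ ∧ ∀ a ∈ ℓ ::ₘ t, 2 ≤ a) ↔
      (t.sum ≤ m ∧ ∀ a ∈ t, 2 ≤ a) := by
    simp only [Multiset.sum_cons, Multiset.mem_cons, forall_eq_or_imp]
    exact ⟨fun ⟨hs, h2⟩ => ⟨by omega, h2.2⟩, fun ⟨hs, h2⟩ => ⟨by omega, hℓ, h2⟩⟩
  have hsub : m + ℓ - (ℓ ::ₘ t).sum = m - t.sum := by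
    rw [Multiset.sum_cons]
    omega
  rw [cycleTypeProb_eq, cycleTypeProb_eq, if_congr hvalid rfl rfl, hsub,
    Multiset.prod_cons, Multiset.prod_count_factorial_cons ht]
  split_ifs
  · push_cast
    ring
  · rw [zero_div]

lemma kappaS_div_sq_eq_sum {m ℓ : ℕ} (hℓ : 2 ≤ ℓ) (hm : m < ℓ) :
    kappaS m / (ℓ : ℝ) ^ 2 = ∑ t ∈ cycleTypes m, cycleTypeProb (m + ℓ) (ℓ ::ₘ t) ^ 2 := by
  rw [kappaS_eq_sum_cycleTypeProb_sq, sum_div]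
  refine sum_congr rfl fun t ht => ?_
  have hℓt : ℓ ∉ t := fun h => (le_of_mem_of_mem_cycleTypes ht h).not_gt hm
  rw [cycleTypeProb_cons hℓ hℓt, div_pow]

lemma Multiset.eq_of_cons_eq_cons_of_forall_lt {α : Type*} [Preorder α] {a b : α}
    {s t : Multiset α} (hs : ∀ x ∈ s, x < b) (h : a ::ₘ s = b ::ₘ t) : a = b ∧ s = t := by
  have hb : b ∈ a ::ₘ s := h ▸ Multiset.mem_cons_self b t
  obtain rfl : a = b := by
    rcases Multiset.mem_cons.mp hb with hba | hbs
    · exact hba.symm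
    · exact absurd (hs b hbs) (lt_irrefl b)
  exact ⟨rfl, (Multiset.cons_inj_right a).mp h⟩

theorem kappaS_lower_recurrence (n k : ℕ) (hk : n < 2 * k) (hkn : k ≤ n) :
    ∑ ℓ ∈ Finset.Icc k n, kappaS (n - ℓ) / (ℓ : ℝ) ^ 2 ≤ kappaS n := by
  obtain rfl | hn := eq_or_ne n 1
  · obtain rfl : k = 1 := by omega
    simp [kappaS, kappa_of_subsingleton]
  have hlt : ∀ ℓ ∈ Icc k n, ∀ t ∈ cycleTypes (n - ℓ), ∀ a ∈ t, a < k := fun ℓ hℓ t ht a ha => by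
    have hat := le_of_mem_of_mem_cycleTypes ht ha
    have hkℓ := (mem_Icc.mp hℓ).1
    omega
  calc ∑ ℓ ∈ Icc k n, kappaS (n - ℓ) / (ℓ : ℝ) ^ 2
      = ∑ ℓ ∈ Icc k n, ∑ t ∈ cycleTypes (n - ℓ), cycleTypeProb n (ℓ ::ₘ t) ^ 2 :=
        sum_congr rfl fun ℓ hℓ => by
          obtain ⟨hkℓ, hℓn⟩ := mem_Icc.mp hℓ
          rw [kappaS_div_sq_eq_sum (by omega) (by omega), Nat.sub_add_cancel hℓn]
    _ = ∑ u ∈ ((Icc k n).sigma fun ℓ => cycleTypes (n - ℓ)).image (fun p => p.1 ::ₘ p.2),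
          cycleTypeProb n u ^ 2 := by
        rw [sum_sigma', sum_image]
        rintro ⟨ℓ, t⟩ hp ⟨ℓ', t'⟩ hp' h
        obtain ⟨hℓ, ht⟩ := mem_sigma.mp hp
        obtain ⟨hℓ', -⟩ := mem_sigma.mp hp'
        obtain ⟨rfl, rfl⟩ := Multiset.eq_of_cons_eq_cons_of_forall_lt
          (fun a ha => (hlt ℓ hℓ t ht a ha).trans_le (mem_Icc.mp hℓ').1) h
        rfl
    _ ≤ kappaS n := sum_cycleTypeProb_sq_le_kappaS n _
end
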